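/- Let L be a Nijenhuis operator with characteristic polynomial χ(t) = det(t·Id - L), viewed as a smooth function of the point with t a formal parameter. Then L*(dχ(t)) - t·dχ(t) = χ(t)·d(tr L), as an identity of 1-forms polynomial in t. -/

import Mathlib

/-- Lie bracket of vector fields on a (model) vector space. -/
noncomputable def vBracket {E : Type*} [NormedAddCommGroup E] [NormedSpace ℝ E]
    (v w : E → E) : E → E :=
  fun x => fderiv ℝ w x (v x) - fderiv ℝ v x (w x)

/-- Nijenhuis torsion of an operator field `L`:
`N_L(v,w) = L²[v,w] + [Lv,Lw] - L[Lv,w] - L[v,Lw]`. -/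
noncomputable def nijTorsion {E : Type*} [NormedAddCommGroup E] [NormedSpace ℝ E]
    (L : E → (E →L[ℝ] E)) (v w : E → E) : E → E :=
  fun x =>
    L x (L x (vBracket v w x))
      + vBracket (fun y => L y (v y)) (fun y => L y (w y)) x
      - L x (vBracket (fun y => L y (v y)) w x)
      - L x (vBracket v (fun y => L y (w y)) x)

noncomputable def detCM (n : ℕ) : ContinuousMultilinearMap ℝ (fun _ : Fin n => (Fin n → ℝ)) ℝ where
  toMultilinearMap := (Matrix.detRowAlternating : (Fin n → ℝ) [⋀^Fin n]→ₗ[ℝ] ℝ).toMultilinearMap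
  cont := by
    show Continuous fun X : Fin n → Fin n → ℝ => Matrix.det (Matrix.of X)
    simp_rw [Matrix.det_apply']
    refine continuous_finset_sum _ fun σ _ => Continuous.mul continuous_const ?_
    exact continuous_finset_prod _ fun i _ => (continuous_apply i).comp (continuous_apply (σ i))

lemma detCM_apply {n : ℕ} (X : Fin n → Fin n → ℝ) : detCM n X = Matrix.det (Matrix.of X) := rfl

lemma det_updateRow_eq {n : ℕ} (A : Matrix (Fin n) (Fin n) ℝ) (i : Fin n) (r : Fin n → ℝ) :
    (A.updateRow i r).det = ∑ k, r k * A.adjugate k i := by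
  rw [← Matrix.cramer_transpose_apply]
  have hr : r = ∑ k, r k • (Pi.single k 1 : Fin n → ℝ) := by
    ext j; simp [Pi.single_apply, Finset.sum_ite_eq', eq_comm]
  conv_lhs => rw [hr]
  rw [map_sum]
  simp only [_root_.map_smul, Finset.sum_apply, Pi.smul_apply, smul_eq_mul]
  refine Finset.sum_congr rfl fun k _ => ?_
  rw [Matrix.adjugate_def]
  rfl

lemma sum_det_updateRow {n : ℕ} (A H : Matrix (Fin n) (Fin n) ℝ) :
    ∑ i, (A.updateRow i (H i)).det = ((Matrix.adjugate A) * H).trace := by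
  simp only [det_updateRow_eq, Matrix.trace, Matrix.diag, Matrix.mul_apply]
  rw [Finset.sum_comm]
  exact Finset.sum_congr rfl fun k _ => Finset.sum_congr rfl fun i _ => mul_comm _ _

lemma nij_sym {E : Type*} [NormedAddCommGroup E] [NormedSpace ℝ E]
    (L : E → (E →L[ℝ] E)) (hL : ContDiff ℝ (⊤ : ℕ∞) L)
    (hN : ∀ v w : E → E, ContDiff ℝ (⊤ : ℕ∞) v → ContDiff ℝ (⊤ : ℕ∞) w →
      ∀ x, nijTorsion L v w x = 0)
    (x ξ η : E) :
    fderiv ℝ L x (L x ξ) η - L x (fderiv ℝ L x ξ η)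
      = fderiv ℝ L x (L x η) ξ - L x (fderiv ℝ L x η ξ) := by
  have hLd : ∀ y, DifferentiableAt ℝ L y := fun y => (hL.differentiable (by simp)) y
  have hLc : ∀ (c : E) (y : E), DifferentiableAt ℝ (fun z => L z c) y :=
    fun c y => (hLd y).clm_apply (differentiableAt_const c)
  have e1 : ∀ c : E, fderiv ℝ (fun z => L z c) x = (fderiv ℝ L x).flip c := by
    intro c
    rw [fderiv_clm_apply (hLd x) (differentiableAt_const c)]
    simp
  have e2 : ∀ c : E, fderiv ℝ (fun z => L z (L z c)) x
      = (L x).comp ((fderiv ℝ L x).flip c) + (fderiv ℝ L x).flip (L x c) := by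
    intro c
    rw [fderiv_clm_apply (hLd x) (hLc c x), e1 c]
  have key := hN (fun _ => ξ) (fun _ => η) contDiff_const contDiff_const x
  simp only [nijTorsion, vBracket, fderiv_const, fderiv_const_apply, Pi.zero_apply,
    ContinuousLinearMap.zero_apply, e1, e2, sub_zero, zero_sub, map_zero, map_neg,
    ContinuousLinearMap.add_apply, ContinuousLinearMap.coe_comp', Function.comp_apply,
    ContinuousLinearMap.flip_apply] at key
  linear_combination (norm := abel) key

section Aux
variable {E : Type*} [NormedAddCommGroup E] [NormedSpace ℝ E] [FiniteDimensional ℝ E]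

noncomputable def matCLM (b : Module.Basis (Fin (Module.finrank ℝ E)) ℝ E) :
    (E →L[ℝ] E) →L[ℝ] (Fin (Module.finrank ℝ E) → Fin (Module.finrank ℝ E) → ℝ) :=
  LinearMap.toContinuousLinearMap
    { toFun := fun f => LinearMap.toMatrix b b (f : E →ₗ[ℝ] E)
      map_add' := fun f g => by
        show LinearMap.toMatrix b b ((f + g : E →L[ℝ] E) : E →ₗ[ℝ] E)
          = LinearMap.toMatrix b b (f : E →ₗ[ℝ] E) + LinearMap.toMatrix b b (g : E →ₗ[ℝ] E)
        rw [ContinuousLinearMap.coe_add, map_add]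
      map_smul' := fun c f => by
        show LinearMap.toMatrix b b ((c • f : E →L[ℝ] E) : E →ₗ[ℝ] E)
          = c • LinearMap.toMatrix b b (f : E →ₗ[ℝ] E)
        rw [ContinuousLinearMap.coe_smul, _root_.map_smul] }

lemma matCLM_apply (b : Module.Basis (Fin (Module.finrank ℝ E)) ℝ E) (f : E →L[ℝ] E) :
    matCLM b f = LinearMap.toMatrix b b (f : E →ₗ[ℝ] E) := rfl

end Aux


/-- for a Nijenhuis operator L with characteristic polynomial
χ(t) = det(t·Id − L), one has L*(dχ(t)) − t·dχ(t) = χ(t)·d(tr L), as an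
identity of 1-forms polynomial in the parameter t. -/
theorem nijenhuis_charpoly_identity
    {E : Type*} [NormedAddCommGroup E] [NormedSpace ℝ E] [FiniteDimensional ℝ E]
    (L : E → (E →L[ℝ] E)) (hL : ContDiff ℝ (⊤ : ℕ∞) L)
    (hN : ∀ v w : E → E, ContDiff ℝ (⊤ : ℕ∞) v → ContDiff ℝ (⊤ : ℕ∞) w →
      ∀ x, nijTorsion L v w x = 0)
    (t : ℝ) (x ξ : E) :
    fderiv ℝ (fun y => LinearMap.det
        (t • (LinearMap.id : E →ₗ[ℝ] E) - (L y : E →ₗ[ℝ] E))) x (L x ξ)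
      - t * fderiv ℝ (fun y => LinearMap.det
        (t • (LinearMap.id : E →ₗ[ℝ] E) - (L y : E →ₗ[ℝ] E))) x ξ
      = LinearMap.det (t • (LinearMap.id : E →ₗ[ℝ] E) - (L x : E →ₗ[ℝ] E))
        * fderiv ℝ (fun y => LinearMap.trace ℝ E (L y : E →ₗ[ℝ] E)) x ξ := by
  classical
  set n := Module.finrank ℝ E with hn
  let b : Module.Basis (Fin n) ℝ E := Module.finBasis ℝ E
  set D : E →L[ℝ] (E →L[ℝ] E) := fderiv ℝ L x with hD
  let T := matCLM (E := E) b
  set c : E →L[ℝ] E := t • ContinuousLinearMap.id ℝ E with hc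
  -- matrices
  set Λ : Matrix (Fin n) (Fin n) ℝ := LinearMap.toMatrix b b ((L x : E →ₗ[ℝ] E)) with hΛ
  set μ : E → Matrix (Fin n) (Fin n) ℝ :=
    fun u => LinearMap.toMatrix b b ((D u : E →ₗ[ℝ] E)) with hμ
  set γ : Matrix (Fin n) (Fin n) ℝ := LinearMap.toMatrix b b ((D.flip ξ : E →ₗ[ℝ] E)) with hγ
  set A : Matrix (Fin n) (Fin n) ℝ := LinearMap.toMatrix b b ((c - L x : E →L[ℝ] E) : E →ₗ[ℝ] E)
    with hA
  set B : Matrix (Fin n) (Fin n) ℝ := Matrix.adjugate A with hB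
  have hLd : DifferentiableAt ℝ L x := (hL.differentiable (by simp)) x
  -- coercion of c - L y
  have hcoe : ∀ y : E, ((c - L y : E →L[ℝ] E) : E →ₗ[ℝ] E)
      = t • (LinearMap.id : E →ₗ[ℝ] E) - (L y : E →ₗ[ℝ] E) := by
    intro y
    ext u
    simp [hc]
  -- the det function equals detCM ∘ (T ∘ (c - L ·))
  have hfun : (fun y => LinearMap.det
        (t • (LinearMap.id : E →ₗ[ℝ] E) - (L y : E →ₗ[ℝ] E)))
      = fun y => detCM n (T (c - L y)) := by
    funext y
    rw [detCM_apply, matCLM_apply, hcoe y]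
    exact (LinearMap.det_toMatrix b _).symm
  -- derivative of the inner map
  have hg : HasFDerivAt (fun y => T (c - L y)) (T.comp (-D)) x := by
    have h1 : HasFDerivAt (fun y => c - L y) (-D) x := hLd.hasFDerivAt.const_sub c
    exact (T.hasFDerivAt).comp x h1
  have hdet : HasFDerivAt (fun y => detCM n (T (c - L y)))
      (((detCM n).linearDeriv (T (c - L x))).comp (T.comp (-D))) x :=
    ((detCM n).hasFDerivAt _).comp x hg
  -- fderiv of the det function, applied to a direction u
  have hχ : ∀ u : E, fderiv ℝ (fun y => LinearMap.det
        (t • (LinearMap.id : E →ₗ[ℝ] E) - (L y : E →ₗ[ℝ] E))) x u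
      = -((B * μ u).trace) := by
    intro u
    rw [hfun, hdet.fderiv]
    have : ((detCM n).linearDeriv (T (c - L x))).comp (T.comp (-D)) u
        = ∑ i, ((Matrix.of (T (c - L x))).updateRow i ((T ((-D) u)) i)).det := by
      rw [ContinuousLinearMap.comp_apply, ContinuousLinearMap.comp_apply,
        ContinuousMultilinearMap.linearDeriv_apply]
      rfl
    rw [this]
    have h2 : Matrix.of (T (c - L x)) = A := rfl
    have h3 : (T ((-D) u)) = -(μ u) := by
      rw [ContinuousLinearMap.neg_apply, map_neg, matCLM_apply]
      rfl
    rw [h2, h3]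
    calc ∑ i, (A.updateRow i ((-(μ u)) i)).det
        = (Matrix.adjugate A * (-(μ u))).trace := sum_det_updateRow A (-(μ u))
      _ = -((B * μ u).trace) := by rw [Matrix.mul_neg, Matrix.trace_neg, hB]
  -- fderiv of the trace function
  have htr : fderiv ℝ (fun y => LinearMap.trace ℝ E (L y : E →ₗ[ℝ] E)) x ξ = (μ ξ).trace := by
    have hT : (fun y => LinearMap.trace ℝ E (L y : E →ₗ[ℝ] E))
        = fun y => (LinearMap.toContinuousLinearMap
            ((LinearMap.trace ℝ E).comp (ContinuousLinearMap.coeLM ℝ))) (L y) := by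
      funext y; rfl
    rw [hT]
    have h5 : HasFDerivAt (fun y => (LinearMap.toContinuousLinearMap
          ((LinearMap.trace ℝ E).comp (ContinuousLinearMap.coeLM ℝ))) (L y))
        ((LinearMap.toContinuousLinearMap
          ((LinearMap.trace ℝ E).comp (ContinuousLinearMap.coeLM ℝ))).comp D) x :=
      (LinearMap.toContinuousLinearMap
          ((LinearMap.trace ℝ E).comp (ContinuousLinearMap.coeLM ℝ))).hasFDerivAt.comp x
        hLd.hasFDerivAt
    rw [h5.fderiv]
    show LinearMap.trace ℝ E ((D ξ : E →L[ℝ] E) : E →ₗ[ℝ] E) = (μ ξ).trace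
    rw [LinearMap.trace_eq_matrix_trace ℝ b, hμ]
  -- matrix algebra facts
  have hA' : A = t • (1 : Matrix (Fin n) (Fin n) ℝ) - Λ := by
    rw [hA, hcoe, map_sub, _root_.map_smul, LinearMap.toMatrix_id, hΛ]
  have hABcomm : Λ * B = B * Λ := by
    have h1 : A * B = B * A := by rw [Matrix.mul_adjugate, Matrix.adjugate_mul]
    have h2 : (t • (1 : Matrix (Fin n) (Fin n) ℝ) - A) * B
        = B * (t • (1 : Matrix (Fin n) (Fin n) ℝ) - A) := by
      rw [Matrix.sub_mul, Matrix.mul_sub, h1, Matrix.smul_mul, Matrix.mul_smul,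
        Matrix.one_mul, Matrix.mul_one]
    have h3 : Λ = t • (1 : Matrix (Fin n) (Fin n) ℝ) - A := by rw [hA']; abel
    rw [h3]; exact h2
  have hΛA : Λ = t • (1 : Matrix (Fin n) (Fin n) ℝ) - A := by rw [hA']; abel
  have hBΛ : B * Λ = t • B - (A.det) • (1 : Matrix (Fin n) (Fin n) ℝ) := by
    rw [hB, hΛA, Matrix.mul_sub, Matrix.mul_smul, Matrix.mul_one, Matrix.adjugate_mul]
  -- the Nijenhuis matrix identity
  have hμL : μ (L x ξ) = Λ * μ ξ + γ * Λ - Λ * γ := by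
    have hlin : ((D (L x ξ) : E →L[ℝ] E) : E →ₗ[ℝ] E)
        = ((L x : E →L[ℝ] E) : E →ₗ[ℝ] E) * ((D ξ : E →L[ℝ] E) : E →ₗ[ℝ] E)
          + ((D.flip ξ : E →L[ℝ] E) : E →ₗ[ℝ] E) * ((L x : E →L[ℝ] E) : E →ₗ[ℝ] E)
          - ((L x : E →L[ℝ] E) : E →ₗ[ℝ] E) * ((D.flip ξ : E →L[ℝ] E) : E →ₗ[ℝ] E) := by
      ext η
      have h := nij_sym L hL hN x ξ η
      simp only [LinearMap.sub_apply, LinearMap.add_apply, Module.End.mul_apply,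
        ContinuousLinearMap.coe_coe, ContinuousLinearMap.flip_apply]
      rw [← hD] at h
      rw [add_sub_assoc, ← h]
      abel
    show (LinearMap.toMatrix b b) ((D (L x ξ) : E →L[ℝ] E) : E →ₗ[ℝ] E)
      = Λ * μ ξ + γ * Λ - Λ * γ
    rw [hlin, map_sub, map_add, LinearMap.toMatrix_mul, LinearMap.toMatrix_mul,
      LinearMap.toMatrix_mul]
  -- final computation
  rw [hχ (L x ξ), hχ ξ, htr]
  have hdetA : LinearMap.det (t • (LinearMap.id : E →ₗ[ℝ] E) - ((L x : E →L[ℝ] E) : E →ₗ[ℝ] E))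
      = A.det := by rw [hA, hcoe]; exact (LinearMap.det_toMatrix b _).symm
  rw [hdetA, hμL]
  have e1 : (B * (Λ * μ ξ + γ * Λ - Λ * γ)).trace
      = (B * Λ * μ ξ).trace + (B * (γ * Λ)).trace - (B * (Λ * γ)).trace := by
    rw [Matrix.mul_sub, Matrix.mul_add, Matrix.trace_sub, Matrix.trace_add, Matrix.mul_assoc]
  have e2 : (B * (γ * Λ)).trace = (B * (Λ * γ)).trace := by
    calc (B * (γ * Λ)).trace = ((B * γ) * Λ).trace := by rw [Matrix.mul_assoc]
      _ = (Λ * (B * γ)).trace := (Matrix.trace_mul_comm _ _)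
      _ = ((Λ * B) * γ).trace := by rw [Matrix.mul_assoc]
      _ = ((B * Λ) * γ).trace := by rw [hABcomm]
      _ = (B * (Λ * γ)).trace := by rw [Matrix.mul_assoc]
  have e3 : (B * Λ * μ ξ).trace = t * (B * μ ξ).trace - A.det * (μ ξ).trace := by
    rw [hBΛ, Matrix.sub_mul, Matrix.trace_sub, Matrix.smul_mul, Matrix.trace_smul,
      Matrix.smul_mul, Matrix.one_mul, Matrix.trace_smul]
    simp [smul_eq_mul]
  rw [e1, e2, e3]
  ring
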